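/- For any initial matrix a₀ ∈ M_n with τ(a₀) = 0 and |a₀|² = 1, the equation a_t = Δa + λ(t)a with λ(t) = -⟨Δa,a⟩/⟨a,a⟩ has a global solution a: [0,∞) → M_n with a(0) = a₀, |a(t)|² = 1 for all t > 0. -/

import Mathlib

open Matrix

attribute [local instance] Matrix.normedAddCommGroup Matrix.normedSpace

noncomputable def matLap {n : ℕ} (x y c : Matrix (Fin n) (Fin n) ℂ) :
    Matrix (Fin n) (Fin n) ℂ :=
  (y * (y * c - c * y) - (y * c - c * y) * y) +
    ((c * x - x * c) * x - x * (c * x - x * c))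

noncomputable def rInner {n : ℕ} (a b : Matrix (Fin n) (Fin n) ℂ) : ℝ :=
  ((aᴴ * b).trace).re

/-!
The flow `b t = exp (t Δ) a₀` of the linear equation `b' = Δ b` exists for all time and never
vanishes. Its normalization `a = b / |b|` has `|a| = 1`, and differentiating
`|b|⁻¹ = ⟨b, b⟩^{-1/2}` produces exactly the term `-⟨Δa, a⟩ a`, so `a` solves the nonlinear
equation.
-/

open NormedSpace (exp)

namespace ContinuousLinearMap

variable {E : Type*} [NormedAddCommGroup E] [NormedSpace ℝ E]

noncomputable def normalize (B : E →L[ℝ] E →L[ℝ] ℝ) (v : E) : E :=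
  (√(B v v))⁻¹ • v

variable {B : E →L[ℝ] E →L[ℝ] ℝ}

theorem normalize_self {v : E} (hv : 0 < B v v) : B (B.normalize v) (B.normalize v) = 1 := by
  have hsqrt : √(B v v) ≠ 0 := (Real.sqrt_pos.mpr hv).ne'
  simp only [normalize, map_smul, _root_.smul_apply, smul_eq_mul]
  field_simp
  exact (Real.sq_sqrt hv.le).symm

theorem hasDerivAt_normalize (hB : ∀ u v, B u v = B v u) {L : E →L[ℝ] E} {b : ℝ → E} {t : ℝ}
    (hb : HasDerivAt b (L (b t)) t) (hpos : 0 < B (b t) (b t)) :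
    HasDerivAt (fun s ↦ B.normalize (b s))
      (L (B.normalize (b t)) + (-(B (L (B.normalize (b t))) (B.normalize (b t))) /
        B (B.normalize (b t)) (B.normalize (b t))) • B.normalize (b t)) t := by
  have hsqrt : √(B (b t) (b t)) ≠ 0 := (Real.sqrt_pos.mpr hpos).ne'
  have hB_self : HasDerivAt (fun s ↦ B (b s) (b s)) (2 * B (L (b t)) (b t)) t := by
    refine (B.hasDerivAt_of_bilinear (fun _ ↦ hb) (fun _ ↦ hb)).congr_deriv ?_
    rw [hB (b t)]
    ring
  have hnorm := ((hB_self.sqrt hpos.ne').inv hsqrt).smul hb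
  rw [normalize_self hpos]
  refine hnorm.congr_deriv ?_
  simp only [normalize, map_smul, _root_.smul_apply, smul_eq_mul, smul_smul,
    Pi.inv_apply, div_one]
  congr 2
  field_simp

theorem exp_apply_ne_zero [CompleteSpace E] (L : E →L[ℝ] E) {v : E} (hv : v ≠ 0) :
    exp L v ≠ 0 := by
  obtain ⟨u, hu⟩ := NormedSpace.isUnit_exp_of_mem_ball (𝕂 := ℝ) (x := L)
    ((NormedSpace.expSeries_radius_eq_top ℝ (E →L[ℝ] E)).symm ▸ edist_lt_top _ _)
  intro h
  apply hv
  calc v = (↑u⁻¹ * ↑u : E →L[ℝ] E) v := by rw [u.inv_mul]; rfl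
    _ = 0 := by rw [hu, mul_apply_eq_comp, h, map_zero]

theorem hasDerivAt_exp_smul_apply [CompleteSpace E] (L : E →L[ℝ] E) (v : E) (t : ℝ) :
    HasDerivAt (fun s : ℝ ↦ exp (s • L) v) (L (exp (t • L) v)) t := by
  simpa using (hasDerivAt_exp_smul_const' L t).clm_apply (hasDerivAt_const t v)

theorem exists_normalized_flow [CompleteSpace E] (hB : ∀ u v, B u v = B v u)
    (hB_pos : ∀ v, v ≠ 0 → 0 < B v v) (L : E →L[ℝ] E) {v : E} (hv : B v v = 1) :
    ∃ a : ℝ → E, a 0 = v ∧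
      (∀ t, HasDerivAt a (L (a t) + (-(B (L (a t)) (a t)) / B (a t) (a t)) • a t) t) ∧
      ∀ t, B (a t) (a t) = 1 := by
  have hv₀ : v ≠ 0 := by
    rintro rfl
    simp at hv
  have hflow_pos (t : ℝ) : 0 < B (exp (t • L) v) (exp (t • L) v) :=
    hB_pos _ (exp_apply_ne_zero _ hv₀)
  refine ⟨fun t ↦ B.normalize (exp (t • L) v), ?_, fun t ↦ ?_, fun t ↦ normalize_self (hflow_pos t)⟩
  · simp [normalize, hv]
  · exact hasDerivAt_normalize hB (hasDerivAt_exp_smul_apply L v t) (hflow_pos t)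

end ContinuousLinearMap

section MatrixLaplacian

variable {n : ℕ}

theorem rInner_comm (a b : Matrix (Fin n) (Fin n) ℂ) : rInner a b = rInner b a := by
  rw [rInner, rInner, ← conjTranspose_conjTranspose a, ← conjTranspose_mul, trace_conjTranspose,
    Complex.star_def, Complex.conj_re, conjTranspose_conjTranspose]

theorem rInner_self_pos {a : Matrix (Fin n) (Fin n) ℂ} (ha : a ≠ 0) : 0 < rInner a a := by
  open ComplexOrder in
  have htrace : 0 < (aᴴ * a).trace :=
    (posSemidef_conjTranspose_mul_self a).trace_nonneg.lt_of_ne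
      (Ne.symm (trace_conjTranspose_mul_self_eq_zero_iff.not.mpr ha))
  exact (Complex.pos_iff.mp htrace).1

noncomputable def rInnerCLM : Matrix (Fin n) (Fin n) ℂ →L[ℝ] Matrix (Fin n) (Fin n) ℂ →L[ℝ] ℝ :=
  LinearMap.toContinuousLinearMap <| LinearMap.toContinuousLinearMap.toLinearMap ∘ₗ
    LinearMap.mk₂ ℝ rInner
      (fun a b c ↦ by simp [rInner, conjTranspose_add, add_mul])
      (fun r a b ↦ by simp [rInner, conjTranspose_smul])
      (fun a b c ↦ by simp [rInner, mul_add])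
      (fun r a b ↦ by simp [rInner])

noncomputable def matLapCLM (x y : Matrix (Fin n) (Fin n) ℂ) :
    Matrix (Fin n) (Fin n) ℂ →L[ℝ] Matrix (Fin n) (Fin n) ℂ :=
  LinearMap.toContinuousLinearMap
    { toFun := matLap x y
      map_add' a b := by simp only [matLap, mul_add, add_mul, mul_sub, sub_mul]; abel
      map_smul' r a := by
        simp only [matLap, RingHom.id_apply, mul_sub, sub_mul, mul_smul_comm, smul_mul_assoc,
          smul_sub, smul_add] }

end MatrixLaplacian

theorem global_existence_general {n : ℕ} (x y : Matrix (Fin n) (Fin n) ℂ)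
    (a₀ : Matrix (Fin n) (Fin n) ℂ) (hn : rInner a₀ a₀ = 1) :
    ∃ a : ℝ → Matrix (Fin n) (Fin n) ℂ, a 0 = a₀ ∧
      (∀ t : ℝ, HasDerivAt a
        (matLap x y (a t) +
          (-(rInner (matLap x y (a t)) (a t)) / rInner (a t) (a t)) • a t) t) ∧
      ∀ t : ℝ, 0 < t → rInner (a t) (a t) = 1 := by
  obtain ⟨a, ha₀, ha', ha_norm⟩ := ContinuousLinearMap.exists_normalized_flow
    (B := rInnerCLM) rInner_comm (fun _ ↦ rInner_self_pos) (matLapCLM x y) hn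
  exact ⟨a, ha₀, ha', fun t _ ↦ ha_norm t⟩

/-- for any a₀ with τ(a₀) = 0 and |a₀|² = 1, the equation
a_t = Δa + λ(t)a with λ(t) = -⟨Δa,a⟩/⟨a,a⟩ has a global solution with a(0) = a₀
and |a(t)|² = 1 for all t > 0. -/
theorem global_existence {n : ℕ} (x y : Matrix (Fin n) (Fin n) ℂ)
    (hx : x.IsHermitian) (hy : y.IsHermitian)
    (a₀ : Matrix (Fin n) (Fin n) ℂ) (htr : a₀.trace = 0) (hn : rInner a₀ a₀ = 1) :
    ∃ a : ℝ → Matrix (Fin n) (Fin n) ℂ, a 0 = a₀ ∧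
      (∀ t : ℝ, HasDerivAt a
        (matLap x y (a t) +
          (-(rInner (matLap x y (a t)) (a t)) / rInner (a t) (a t)) • a t) t) ∧
      ∀ t : ℝ, 0 < t → rInner (a t) (a t) = 1 :=
  global_existence_general x y a₀ hn
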